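/- arXiv:2410.10620 — 3 statements merged into one kernel-verified Lean document; each statement's English description precedes it below -/
import Mathlib

section
/- The sparse binary representation of an integer is unique: if c and d are finitely supported functions ℕ → ℤ with all values in {-1, 0, 1}, each satisfying the non-adjacency condition (c i ≠ 0 → c (i+1) = 0, and likewise for d), and Σ_i c i · 2^i = Σ_i d i · 2^i, then c = d. -/
lemma naf_aux : ∀ (N : ℕ) (c d : ℕ → ℤ),
    (∀ i, c i = -1 ∨ c i = 0 ∨ c i = 1) → (∀ i, c i ≠ 0 → c (i + 1) = 0) →
    (∀ i, d i = -1 ∨ d i = 0 ∨ d i = 1) → (∀ i, d i ≠ 0 → d (i + 1) = 0) →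
    (∑ i ∈ Finset.range N, c i * 2 ^ i = ∑ i ∈ Finset.range N, d i * 2 ^ i) →
    ∀ i < N, c i = d i := by
  intro N
  induction N with
  | zero => intro c d _ _ _ _ _ i hi; omega
  | succ N ih =>
    intro c d hc1 hc2 hd1 hd2 hsum
    have hsplit : ∀ e : ℕ → ℤ, ∑ i ∈ Finset.range (N + 1), e i * 2 ^ i
        = e 0 + 2 * ∑ i ∈ Finset.range N, e (i + 1) * 2 ^ i := by
      intro e
      rw [Finset.sum_range_succ', Finset.mul_sum, add_comm]
      congr 1
      · simp
      · apply Finset.sum_congr rfl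
        intro i _
        rw [pow_succ]; ring
    have hdvd : ∀ e : ℕ → ℤ, (∀ i, e i ≠ 0 → e (i + 1) = 0) → e 0 ≠ 0 →
        (2 : ℤ) ∣ ∑ i ∈ Finset.range N, e (i + 1) * 2 ^ i := by
      intro e he h0
      apply Finset.dvd_sum
      intro i _
      cases i with
      | zero => simp [he 0 h0]
      | succ k => exact Dvd.dvd.mul_left ⟨2 ^ k, by ring⟩ _
    have e : c 0 + 2 * ∑ i ∈ Finset.range N, c (i + 1) * 2 ^ i
        = d 0 + 2 * ∑ i ∈ Finset.range N, d (i + 1) * 2 ^ i := by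
      rw [← hsplit c, ← hsplit d]; exact hsum
    have h0 : c 0 = d 0 := by
      by_cases hc0 : c 0 = 0 <;> by_cases hd0 : d 0 = 0
      · rw [hc0, hd0]
      · have := hdvd d hd2 hd0
        have h1 := hc1 0; have h2 := hd1 0
        omega
      · have := hdvd c hc2 hc0
        have h1 := hc1 0; have h2 := hd1 0
        omega
      · have t1 := hdvd c hc2 hc0
        have t2 := hdvd d hd2 hd0
        have h1 := hc1 0; have h2 := hd1 0
        omega
    have hT : ∑ i ∈ Finset.range N, c (i + 1) * 2 ^ i
        = ∑ i ∈ Finset.range N, d (i + 1) * 2 ^ i := by omega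
    have ih' := ih (fun i => c (i + 1)) (fun i => d (i + 1))
      (fun i => hc1 (i + 1)) (fun i h => hc2 (i + 1) h)
      (fun i => hd1 (i + 1)) (fun i h => hd2 (i + 1) h) hT
    intro i hi
    cases i with
    | zero => exact h0
    | succ k => exact ih' k (by omega)

/-- The sparse (non-adjacent form) binary representation of an integer is unique. -/
theorem sparse_binary_representation_unique (c d : ℕ →₀ ℤ)
    (hc1 : ∀ i, c i ∈ ({-1, 0, 1} : Set ℤ))
    (hc2 : ∀ i, c i ≠ 0 → c (i + 1) = 0)
    (hd1 : ∀ i, d i ∈ ({-1, 0, 1} : Set ℤ))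
    (hd2 : ∀ i, d i ≠ 0 → d (i + 1) = 0)
    (hsum : ∑ i ∈ c.support, c i * 2 ^ i = ∑ i ∈ d.support, d i * 2 ^ i) :
    c = d := by
  set N := (c.support ∪ d.support).sup id + 1 with hN
  have hlt : ∀ a ∈ c.support ∪ d.support, a < N := by
    intro a ha
    have : a ≤ (c.support ∪ d.support).sup id := by
      simpa using Finset.le_sup (f := id) ha
    omega
  have hconv : ∀ e : ℕ →₀ ℤ, e.support ⊆ c.support ∪ d.support →
      ∑ i ∈ e.support, e i * 2 ^ i = ∑ i ∈ Finset.range N, e i * 2 ^ i := by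
    intro e hsub
    apply Finset.sum_subset
    · intro a ha
      exact Finset.mem_range.mpr (hlt a (hsub ha))
    · intro a _ ha
      simp [Finsupp.notMem_support_iff.mp ha]
  have hsum' : ∑ i ∈ Finset.range N, c i * 2 ^ i = ∑ i ∈ Finset.range N, d i * 2 ^ i := by
    rw [← hconv c Finset.subset_union_left, ← hconv d Finset.subset_union_right]
    exact hsum
  have key := naf_aux N c d
    (fun i => by have := hc1 i; simpa using this) hc2
    (fun i => by have := hd1 i; simpa using this) hd2 hsum'
  ext a
  by_cases ha : a < N
  · exact key a ha
  · have hac : a ∉ c.support := fun h => ha (hlt a (Finset.mem_union_left _ h))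
    have had : a ∉ d.support := fun h => ha (hlt a (Finset.mem_union_right _ h))
    rw [Finsupp.notMem_support_iff.mp hac, Finsupp.notMem_support_iff.mp had]
end

section
/- Every integer n has a unique sparse binary representation: there exists exactly one finitely supported function c : ℕ → ℤ with c i ∈ {-1, 0, 1} for all i, satisfying the non-adjacency condition (for all i, c i ≠ 0 → c (i+1) = 0), and n = Σ_i c i · 2^i. -/
/-!
Read a digit string as a polynomial `p` with `p.eval 2 = n`. In a sparse representation the lowest
digit is forced by `n` modulo `4`: it is `0` if `n` is even, and otherwise the `d = ±1` with
`n ≡ d [ZMOD 4]`, because the digit after a nonzero one vanishes. Removing it (`divX`) leaves a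
sparse representation of `(n - d) / 2`; this gives uniqueness by induction on the digit position
and existence by induction on `|n|`.
-/

open Polynomial

lemma eval_eq_coeff_zero_add_mul_eval_divX {R : Type*} [CommSemiring R] (p : R[X]) (x : R) :
    p.eval x = p.coeff 0 + x * p.divX.eval x := by
  conv_lhs => rw [← X_mul_divX_add p]
  simp only [eval_add, eval_mul, eval_X, eval_C]
  ring

/-- The lowest sparse digit of `n`; for odd `n` it makes `(n - nafDigit n) / 2` even. -/
def nafDigit (n : ℤ) : ℤ := if n % 2 = 0 then 0 else 2 - n % 4

structure IsNAF (p : ℤ[X]) : Prop where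
  coeff_mem : ∀ i, p.coeff i ∈ ({-1, 0, 1} : Set ℤ)
  coeff_succ_eq_zero : ∀ i, p.coeff i ≠ 0 → p.coeff (i + 1) = 0

namespace IsNAF

variable {p q : ℤ[X]}

lemma divX (hp : IsNAF p) : IsNAF p.divX where
  coeff_mem i := by simpa only [coeff_divX] using hp.coeff_mem (i + 1)
  coeff_succ_eq_zero i := by simpa only [coeff_divX] using hp.coeff_succ_eq_zero (i + 1)

lemma C_add_X_mul {d : ℤ} (hd : d ∈ ({-1, 0, 1} : Set ℤ)) (hp : IsNAF p)
    (hadj : d ≠ 0 → p.coeff 0 = 0) : IsNAF (C d + X * p) where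
  coeff_mem
    | 0 => by simpa only [coeff_add, coeff_C_zero, coeff_X_mul_zero, add_zero] using hd
    | i + 1 => by simpa only [coeff_add, coeff_C_succ, coeff_X_mul, zero_add] using hp.coeff_mem i
  coeff_succ_eq_zero
    | 0 => by
      simpa only [coeff_add, coeff_C_zero, coeff_C_succ, coeff_X_mul_zero, coeff_X_mul, add_zero,
        zero_add] using hadj
    | i + 1 => by
      simpa only [coeff_add, coeff_C_succ, coeff_X_mul, zero_add] using hp.coeff_succ_eq_zero i

lemma coeff_zero_eq_nafDigit (hp : IsNAF p) : p.coeff 0 = nafDigit (p.eval 2) := by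
  have h0 := hp.coeff_mem 0
  have h01 := hp.coeff_succ_eq_zero 0
  have heval := eval_eq_coeff_zero_add_mul_eval_divX p 2
  rw [eval_eq_coeff_zero_add_mul_eval_divX p.divX 2, coeff_divX] at heval
  simp only [Set.mem_insert_iff, Set.mem_singleton_iff] at h0
  unfold nafDigit
  split <;> omega

lemma eq_of_eval_two_eq (hp : IsNAF p) (hq : IsNAF q) (h : p.eval 2 = q.eval 2) : p = q := by
  ext i
  induction i generalizing p q with
  | zero => rw [hp.coeff_zero_eq_nafDigit, hq.coeff_zero_eq_nafDigit, h]
  | succ i ih =>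
    have h0 : p.coeff 0 = q.coeff 0 := by
      rw [hp.coeff_zero_eq_nafDigit, hq.coeff_zero_eq_nafDigit, h]
    rw [← coeff_divX, ← coeff_divX]
    refine ih hp.divX hq.divX ?_
    rw [eval_eq_coeff_zero_add_mul_eval_divX p, eval_eq_coeff_zero_add_mul_eval_divX q, h0] at h
    omega

end IsNAF

lemma exists_isNAF_eval_two_eq (n : ℤ) : ∃ p : ℤ[X], IsNAF p ∧ p.eval 2 = n := by
  by_cases hn : n = 0
  · exact ⟨0, ⟨by simp, by simp⟩, by simp [hn]⟩
  set d := nafDigit n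
  have hd : d ∈ ({-1, 0, 1} : Set ℤ) := by
    simp only [Set.mem_insert_iff, Set.mem_singleton_iff, d]
    unfold nafDigit; split <;> omega
  have hn_eq : n = d + 2 * ((n - d) / 2) := by unfold d nafDigit; split <;> omega
  have hlt : ((n - d) / 2).natAbs < n.natAbs := by unfold d nafDigit; split <;> omega
  have hnext : d ≠ 0 → nafDigit ((n - d) / 2) = 0 := by
    unfold d nafDigit; split <;> split <;> omega
  obtain ⟨q, hq, hq_eval⟩ := exists_isNAF_eval_two_eq ((n - d) / 2)
  refine ⟨C d + X * q, hq.C_add_X_mul hd fun hd0 => ?_, ?_⟩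
  · rw [hq.coeff_zero_eq_nafDigit, hq_eval, hnext hd0]
  · simp only [eval_add, eval_C, eval_mul, eval_X, hq_eval]
    exact hn_eq.symm
termination_by n.natAbs

theorem existsUnique_isNAF_eval_two_eq (n : ℤ) : ∃! p : ℤ[X], IsNAF p ∧ p.eval 2 = n := by
  obtain ⟨p, hp, hp_eval⟩ := exists_isNAF_eval_two_eq n
  exact ⟨p, ⟨hp, hp_eval⟩, fun q ⟨hq, hq_eval⟩ =>
    hq.eq_of_eval_two_eq hp (hq_eval.trans hp_eval.symm)⟩

/-- Every integer has exactly one sparse (non-adjacent form) binary representation. -/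
theorem sparse_binary_representation_existsUnique (n : ℤ) :
    ∃! c : ℕ →₀ ℤ,
      (∀ i, c i ∈ ({-1, 0, 1} : Set ℤ)) ∧
      (∀ i, c i ≠ 0 → c (i + 1) = 0) ∧
      n = ∑ i ∈ c.support, c i * 2 ^ i := by
  refine ((toFinsuppIso ℤ).toEquiv.trans AddMonoidAlgebra.coeffEquiv).existsUnique_congr
    (fun p => ?_) |>.mp (existsUnique_isNAF_eval_two_eq n)
  rw [eq_comm, eval_eq_sum, Polynomial.sum_def]
  exact ⟨fun ⟨⟨hmem, hadj⟩, heval⟩ => ⟨hmem, hadj, heval⟩,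
    fun ⟨hmem, hadj, heval⟩ => ⟨⟨hmem, hadj⟩, heval⟩⟩
end

section
/- Let c : ℕ → ℤ be a function with c i ∈ {-1, 0, 1} for all i, satisfying the non-adjacency condition (for all i, c i ≠ 0 → c (i+1) = 0). Suppose c n = 1 and c i = 0 for all i > n. Then Σ_{i ≤ n} c i · 2^i ≥ (2^{n+1} + 1) / 3; in particular the represented integer is positive. -/
lemma sparse_aux (c : ℕ → ℤ)
    (h1 : ∀ i, c i ∈ ({-1, 0, 1} : Set ℤ))
    (h2 : ∀ i, c i ≠ 0 → c (i + 1) = 0) :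
    ∀ m, 1 - 2 ^ (m + 1) ≤ 3 * ∑ i ∈ Finset.range m, c i * 2 ^ i := by
  intro m
  induction m using Nat.strong_induction_on with
  | _ m ih =>
    match m with
    | 0 => simp
    | 1 =>
      have := h1 0
      simp only [Set.mem_insert_iff, Set.mem_singleton_iff] at this
      rcases this with h | h | h <;> simp [Finset.sum_range_succ, h] <;> norm_num
    | (k + 2) =>
      have hck := h1 (k + 1)
      simp only [Set.mem_insert_iff, Set.mem_singleton_iff] at hck
      rcases hck with h | h | h
      · -- c (k+1) = -1, so c k = 0
        have hk0 : c k = 0 := by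
          by_contra hne
          have := h2 k hne
          rw [this] at h; norm_num at h
        have iH := ih k (by omega)
        rw [Finset.sum_range_succ, Finset.sum_range_succ, hk0, h]
        have : (2:ℤ) ^ (k + 1) ≤ 2 ^ (k + 2) := by
          apply pow_le_pow_right₀ <;> omega
        ring_nf
        ring_nf at iH
        nlinarith [pow_pos (by norm_num : (0:ℤ) < 2) k]
      · have iH := ih (k + 1) (by omega)
        rw [Finset.sum_range_succ, h]
        have : (2:ℤ) ^ (k + 2) ≤ 2 ^ (k + 3) := by
          apply pow_le_pow_right₀ <;> omega
        nlinarith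
      · have iH := ih (k + 1) (by omega)
        rw [Finset.sum_range_succ, h]
        have h2pos : (0:ℤ) < 2 ^ (k + 1) := pow_pos (by norm_num) _
        have : (2:ℤ) ^ (k + 2) ≤ 2 ^ (k + 3) := by
          apply pow_le_pow_right₀ <;> omega
        nlinarith

/-- If a sparse digit sequence has leading digit `+1` at position `n`
(and zero digits above), then its value satisfies
`3 * Σ_{i ≤ n} c i * 2^i ≥ 2^(n+1) + 1`; in particular the value is positive. -/
theorem sparse_binary_leading_one_pos (c : ℕ → ℤ) (n : ℕ)
    (h1 : ∀ i, c i ∈ ({-1, 0, 1} : Set ℤ))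
    (h2 : ∀ i, c i ≠ 0 → c (i + 1) = 0)
    (hn : c n = 1)
    (h3 : ∀ i, n < i → c i = 0) :
    2 ^ (n + 1) + 1 ≤ 3 * ∑ i ∈ Finset.range (n + 1), c i * 2 ^ i ∧
    0 < ∑ i ∈ Finset.range (n + 1), c i * 2 ^ i := by
  have key : 2 ^ (n + 1) + 1 ≤ 3 * ∑ i ∈ Finset.range (n + 1), c i * 2 ^ i := by
    match n, hn with
    | 0, hn => simp [hn]
    | (k + 1), hn =>
      have hk0 : c k = 0 := by
        by_contra hne
        have := h2 k hne
        rw [this] at hn; norm_num at hn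
      have iH := sparse_aux c h1 h2 k
      rw [Finset.sum_range_succ, Finset.sum_range_succ, hk0, hn]
      have h2pos : (0:ℤ) < 2 ^ k := pow_pos (by norm_num) _
      ring_nf
      ring_nf at iH
      nlinarith
  refine ⟨key, ?_⟩
  have h2pos : (0:ℤ) < 2 ^ (n + 1) := pow_pos (by norm_num) _
  nlinarith
end
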